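/- Every C* set in a discrete commutative semigroup S is a central* set; equivalently, every idempotent in the smallest ideal K(βS) belongs to J(S), so a set belonging to all idempotents of J(S) belongs to all minimal idempotents. -/

import Mathlib

/-!
Ultrafilters all of whose members are J-sets form a two-sided ideal `J(S)` of `βS`: the
absorption properties are immediate from the definition of a J-set, and `J(S)` is nonempty
because J-sets are partition regular, which follows from the Hales–Jewett theorem applied to
words whose letters are the finitely many sequences of a family. Hence the smallest ideal lies
in `J(S)`, so every minimal idempotent is an idempotent of `J(S)`.
-/

attribute [local instance] Ultrafilter.semigroup

variable {S : Type*}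

/-- The product `∏_{t ∈ H} f t` in a (commutative) semigroup, computed in increasing
order of indices; junk value `f 0` if `H = ∅`. -/
def semigroupProd [Semigroup S] (f : ℕ → S) (H : Finset ℕ) : S :=
  if h : H.Nonempty then
    (((H.erase (H.min' h)).sort (· ≤ ·)).map f).foldl (· * ·) (f (H.min' h))
  else f 0

/-- `A` is a J-set in the commutative semigroup `S`. -/
def IsJSet [CommSemigroup S] (A : Set S) : Prop :=
  ∀ F : Finset (ℕ → S), ∃ (a : S) (H : Finset ℕ), H.Nonempty ∧
    ∀ f ∈ F, a * semigroupProd f H ∈ A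

/-- `J(S)`: the ultrafilters on `S` all of whose members are J-sets. -/
def JSetUltra [CommSemigroup S] : Set (Ultrafilter S) :=
  {p | ∀ A ∈ p, IsJSet A}

/-- `I` is a two-sided ideal of `βS`. -/
def IsUltraIdeal [Semigroup S] (I : Set (Ultrafilter S)) : Prop :=
  I.Nonempty ∧ ∀ p ∈ I, ∀ q : Ultrafilter S, q * p ∈ I ∧ p * q ∈ I

/-- `p` lies in the smallest two-sided ideal `K(βS)`. -/
def InSmallestIdeal [Semigroup S] (p : Ultrafilter S) : Prop :=
  ∀ I : Set (Ultrafilter S), IsUltraIdeal I → p ∈ I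

lemma WithOne.coe_foldl_mul [Semigroup S] (l : List S) (a : S) :
    ((l.foldl (· * ·) a : S) : WithOne S) = a * (l.map (↑)).prod := by
  induction l generalizing a with
  | nil => simp
  | cons t l ih => simp [ih (a * t), mul_assoc]

lemma coe_semigroupProd [CommSemigroup S] (f : ℕ → S) {H : Finset ℕ} (hH : H.Nonempty) :
    ((semigroupProd f H : S) : WithOne S) = ∏ t ∈ H, (f t : WithOne S) := by
  rw [semigroupProd, dif_pos hH, WithOne.coe_foldl_mul,
    ← Finset.mul_prod_erase H _ (H.min'_mem hH), Finset.prod_eq_multiset_prod,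
    ← Finset.sort_eq (s := H.erase (H.min' hH)) (r := (· ≤ ·))]
  simp only [Multiset.map_coe, Multiset.prod_coe, List.map_map]
  rfl

def mulWithOne [Mul S] (a : S) : WithOne S → S :=
  WithOne.recOneCoe a (a * ·)

lemma coe_mulWithOne [Mul S] (a : S) (u : WithOne S) :
    ((mulWithOne a u : S) : WithOne S) = a * u := by
  induction u using WithOne.recOneCoe with
  | one => rfl
  | coe b => rfl

lemma Combinatorics.Line.prod_apply_eq_mul {α ι M : Type*} [Fintype ι] [CommMonoid M]
    (l : Combinatorics.Line α ι) (φ : ι → α → M) (x y : α) :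
    ∏ i, φ i (l x i) = (∏ i with l.idxFun i = none, φ i x) *
      ∏ i with l.idxFun i ≠ none, φ i (l y i) := by
  rw [← Finset.prod_filter_mul_prod_filter_not Finset.univ (fun i => l.idxFun i = none)]
  congr 1 <;> refine Finset.prod_congr rfl fun i hi => ?_
  · simp [(Finset.mem_filter.mp hi).2]
  · obtain ⟨b, hb⟩ := Option.ne_none_iff_exists'.mp (Finset.mem_filter.mp hi).2
    simp [hb]

lemma exists_mul_semigroupProd_monochromatic [CommSemigroup S] {κ : Type*} [Finite κ]
    (c : S → κ) {F : Finset (ℕ → S)} (hF : F.Nonempty) :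
    ∃ (k : κ) (a : S) (H : Finset ℕ), H.Nonempty ∧
      ∀ f ∈ F, c (a * semigroupProd f H) = k := by
  classical
  obtain ⟨f₀, hf₀⟩ := hF
  obtain ⟨ι, _, hHJ⟩ := Combinatorics.Line.exists_mono_in_high_dimension F κ
  let e : ι → ℕ := fun i => Fintype.equivFin ι i
  have he : e.Injective := Fin.val_injective.comp (Fintype.equivFin ι).injective
  -- The factor `f₀ 0` puts `word w`, and `a` below, in `S` even when the product is `1`.
  let word (w : ι → F) : S := mulWithOne (f₀ 0) (∏ i, ((w i).1 (e i) : WithOne S))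
  obtain ⟨l, k, hl⟩ := hHJ (c ∘ word)
  let H : Finset ℕ := (Finset.univ.filter fun i => l.idxFun i = none).image e
  have hH : H.Nonempty := by
    obtain ⟨i, hi⟩ := l.proper
    exact ⟨e i, Finset.mem_image_of_mem e (by simp [hi])⟩
  let a : S := mulWithOne (f₀ 0)
    (∏ i with l.idxFun i ≠ none, ((l ⟨f₀, hf₀⟩ i).1 (e i) : WithOne S))
  have hword (x : F) : word (l x) = a * semigroupProd x.1 H := by
    apply WithOne.coe_injective
    rw [coe_mulWithOne, WithOne.coe_mul, coe_mulWithOne, coe_semigroupProd _ hH,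
      Finset.prod_image fun i _ j _ h => he h,
      l.prod_apply_eq_mul (fun i (y : F) => (y.1 (e i) : WithOne S)) x ⟨f₀, hf₀⟩]
    ac_rfl
  exact ⟨k, a, H, hH, fun f hf => by simpa [hword] using hl ⟨f, hf⟩⟩

lemma exists_isJSet_of_sUnion_eq_univ [CommSemigroup S] [Nonempty S] {T : Finset (Set S)}
    (hT : ⋃₀ (T : Set (Set S)) = Set.univ) : ∃ A ∈ T, IsJSet A := by
  classical
  by_contra! hnot
  have hcover (s : S) : ∃ A : T, s ∈ A.1 := by
    obtain ⟨A, hA, hs⟩ := Set.mem_sUnion.mp (hT ▸ Set.mem_univ s)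
    exact ⟨⟨A, hA⟩, hs⟩
  choose colour hcolour using hcover
  have hwitness (A : T) : ∃ W : Finset (ℕ → S),
      ∀ (a : S) (H : Finset ℕ), H.Nonempty → ∃ f ∈ W, a * semigroupProd f H ∉ A.1 := by
    simpa [IsJSet] using hnot A.1 A.2
  choose W hW using hwitness
  let F : Finset (ℕ → S) := insert (fun _ => Classical.arbitrary S) (Finset.univ.biUnion W)
  obtain ⟨A, a, H, hH, hmono⟩ :=
    exists_mul_semigroupProd_monochromatic colour (F := F) (Finset.insert_nonempty _ _)
  obtain ⟨f, hfW, hfA⟩ := hW A a H hH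
  have hfF : f ∈ F :=
    Finset.mem_insert_of_mem (Finset.mem_biUnion.mpr ⟨A, Finset.mem_univ _, hfW⟩)
  exact hfA (hmono f hfF ▸ hcolour _)

lemma jSetUltra_nonempty [CommSemigroup S] [Nonempty S] : (JSetUltra (S := S)).Nonempty := by
  obtain ⟨p, hp⟩ := Ultrafilter.exists_ultrafilter_of_finite_inter_nonempty
    {C : Set S | ¬ IsJSet Cᶜ} fun T hT => by
      classical
      by_contra hempty
      have hcover : ⋃₀ ((T.image compl : Finset (Set S)) : Set (Set S)) = Set.univ := by
        simpa [Set.eq_univ_iff_forall, Set.not_nonempty_iff_eq_empty,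
          Set.eq_empty_iff_forall_notMem] using hempty
      obtain ⟨_, hA, hJ⟩ := exists_isJSet_of_sUnion_eq_univ hcover
      obtain ⟨C, hC, rfl⟩ := Finset.mem_image.mp hA
      exact hT hC hJ
  refine ⟨p, fun A hA => ?_⟩
  by_contra hJ
  exact (Ultrafilter.compl_mem_iff_notMem.mp (hp (by simpa using hJ))) hA

lemma mul_mem_jSetUltra_of_mem_right [CommSemigroup S] (q : Ultrafilter S) {p : Ultrafilter S}
    (hp : p ∈ JSetUltra) : q * p ∈ JSetUltra := by
  intro A hA F
  obtain ⟨s, hs⟩ :=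
    Ultrafilter.nonempty_of_mem (show {s | {t | s * t ∈ A} ∈ p} ∈ q from hA)
  obtain ⟨a, H, hH, hprod⟩ := hp _ hs F
  exact ⟨s * a, H, hH, fun f hf => by simpa [mul_assoc] using hprod f hf⟩

lemma mul_mem_jSetUltra_of_mem_left [CommSemigroup S] {p : Ultrafilter S} (hp : p ∈ JSetUltra)
    (q : Ultrafilter S) : p * q ∈ JSetUltra := by
  intro A hA F
  obtain ⟨a, H, hH, hprod⟩ := hp {s | {t | s * t ∈ A} ∈ q} hA F
  obtain ⟨t, ht⟩ := Ultrafilter.nonempty_of_mem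
    ((Filter.biInter_finset_mem F).mpr hprod : ⋂ f ∈ F, {t | _} ∈ (q : Filter S))
  simp only [Set.mem_iInter, Set.mem_ofPred_eq] at ht
  exact ⟨a * t, H, hH, fun f hf => mul_right_comm a _ t ▸ ht f hf⟩

lemma isUltraIdeal_jSetUltra [CommSemigroup S] [Nonempty S] :
    IsUltraIdeal (JSetUltra (S := S)) :=
  ⟨jSetUltra_nonempty, fun _ hp q =>
    ⟨mul_mem_jSetUltra_of_mem_right q hp, mul_mem_jSetUltra_of_mem_left hp q⟩⟩

lemma InSmallestIdeal.mem_jSetUltra [CommSemigroup S] {p : Ultrafilter S}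
    (hp : InSmallestIdeal p) : p ∈ JSetUltra :=
  have : Nonempty S := Filter.nonempty_of_neBot (p : Filter S)
  hp _ isUltraIdeal_jSetUltra

/-- Every idempotent of `K(βS)` lies in `J(S)`; consequently every C* set
(a set belonging to all idempotents of `J(S)`) is central*
(belongs to every minimal idempotent). -/
theorem cStar_implies_centralStar [CommSemigroup S] :
    (∀ p : Ultrafilter S, p * p = p → InSmallestIdeal p → p ∈ JSetUltra) ∧
      ∀ A : Set S, (∀ p ∈ JSetUltra (S := S), p * p = p → A ∈ p) →
        ∀ p : Ultrafilter S, p * p = p → InSmallestIdeal p → A ∈ p :=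
  ⟨fun _ _ hK => hK.mem_jSetUltra, fun _ hA p hpp hK => hA p hK.mem_jSetUltra hpp⟩
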